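/- Let z1, z2, z3 : (0,∞) → [0,∞) satisfy z_j(t) → 0 as t → ∞ for j = 1,2,3. Suppose x : [0,∞) → [0,∞) is differentiable, y : [0,∞) → [0,∞) satisfies x(t) ≤ y(t) for all t, and x'(t) + α x(t) + β y(t) ≤ z1(t) + z2(t) x(t) + z3(t) y(t) holds for all t > 0, for some constants α, β > 0. Then x(t) → 0 as t → ∞. -/
import Mathlib


open Filter

/-- Grönwall-type decay lemma (Lemma 2.4 / statement 0). -/
theorem gronwall_decay (α β : ℝ) (hα : 0 < α) (hβ : 0 < β)
    (x y z1 z2 z3 : ℝ → ℝ)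
    (hx0 : ∀ t ≥ (0:ℝ), 0 ≤ x t) (hy0 : ∀ t ≥ (0:ℝ), 0 ≤ y t)
    (hz1 : ∀ t > (0:ℝ), 0 ≤ z1 t) (hz2 : ∀ t > (0:ℝ), 0 ≤ z2 t)
    (hz3 : ∀ t > (0:ℝ), 0 ≤ z3 t)
    (hz1lim : Tendsto z1 atTop (nhds 0)) (hz2lim : Tendsto z2 atTop (nhds 0))
    (hz3lim : Tendsto z3 atTop (nhds 0))
    (hdiff : ∀ t ≥ (0:ℝ), DifferentiableAt ℝ x t)
    (hxy : ∀ t ≥ (0:ℝ), x t ≤ y t)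
    (hineq : ∀ t > (0:ℝ),
      deriv x t + α * x t + β * y t ≤ z1 t + z2 t * x t + z3 t * y t) :
    Tendsto x atTop (nhds 0) := by
  rw [Metric.tendsto_atTop]
  intro ε hε
  set c : ℝ := α / 2 with hc
  have hcpos : 0 < c := by positivity
  -- pick T beyond which z1 < α*ε/8, z2 ≤ α/2, z3 ≤ β
  have ev1 : ∀ᶠ t in atTop, z1 t < α * ε / 8 :=
    hz1lim.eventually_lt_const (by positivity)
  have ev2 : ∀ᶠ t in atTop, z2 t < c := hz2lim.eventually_lt_const hcpos
  have ev3 : ∀ᶠ t in atTop, z3 t < β := hz3lim.eventually_lt_const hβ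
  obtain ⟨a, ha⟩ := eventually_atTop.mp ((ev1.and ev2).and ev3)
  set T : ℝ := max a 1 with hT
  have hT1 : (1:ℝ) ≤ T := le_max_right _ _
  have hT0 : (0:ℝ) < T := lt_of_lt_of_le one_pos hT1
  set g : ℝ → ℝ := fun t => (x t - ε / 4) * Real.exp (c * t) with hg
  have hgderiv : ∀ t : ℝ, 0 < t →
      HasDerivAt g (deriv x t * Real.exp (c * t) +
        (x t - ε / 4) * (Real.exp (c * t) * c)) t := by
    intro t ht
    have h1 : HasDerivAt (fun t => x t - ε / 4) (deriv x t) t :=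
      ((hdiff t ht.le).hasDerivAt).sub_const _
    have h2 : HasDerivAt (fun t => Real.exp (c * t)) (Real.exp (c * t) * c) t := by
      simpa using ((hasDerivAt_id t).const_mul c).exp
    exact h1.mul h2
  have hanti : AntitoneOn g (Set.Ici T) := by
    apply antitoneOn_of_deriv_nonpos (convex_Ici T)
    · intro t ht
      exact ((hgderiv t (lt_of_lt_of_le hT0 ht)).differentiableAt).continuousAt.continuousWithinAt
    · intro t ht
      rw [interior_Ici] at ht
      exact ((hgderiv t (lt_trans hT0 ht)).differentiableAt).differentiableWithinAt
    · intro t ht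
      rw [interior_Ici] at ht
      have htpos : 0 < t := lt_trans hT0 ht
      rw [(hgderiv t htpos).deriv]
      have haT : a ≤ t := le_trans (le_max_left a 1) ht.le
      obtain ⟨⟨h1, h2⟩, h3⟩ := ha t haT
      have hx' : deriv x t ≤ α * ε / 8 - c * x t := by
        have hi := hineq t htpos
        have hxt := hx0 t htpos.le
        have hyt := hy0 t htpos.le
        nlinarith [mul_le_mul_of_nonneg_right h2.le hxt,
          mul_le_mul_of_nonneg_right h3.le hyt]
      have hep : (0:ℝ) < Real.exp (c * t) := Real.exp_pos _
      have : deriv x t * Real.exp (c * t) + (x t - ε / 4) * (Real.exp (c * t) * c)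
          ≤ (α * ε / 8 - c * ε / 4) * Real.exp (c * t) := by
        nlinarith [mul_le_mul_of_nonneg_right hx' hep.le]
      have hz : α * ε / 8 - c * ε / 4 = 0 := by rw [hc]; ring
      rw [hz, zero_mul] at this
      exact this
  -- decay of the exponential term
  have hexp : Tendsto (fun t => |g T| * Real.exp (-(c * t))) atTop (nhds 0) := by
    have h1 : Tendsto (fun t : ℝ => c * t) atTop atTop :=
      tendsto_id.const_mul_atTop hcpos
    have h2 : Tendsto (fun t : ℝ => Real.exp (-(c * t))) atTop (nhds 0) :=
      Real.tendsto_exp_neg_atTop_nhds_zero.comp h1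
    simpa using h2.const_mul |g T|
  have ev4 : ∀ᶠ t in atTop, |g T| * Real.exp (-(c * t)) < ε / 2 :=
    hexp.eventually_lt_const (by positivity)
  obtain ⟨b, hb⟩ := eventually_atTop.mp ev4
  refine ⟨max T b, fun t ht => ?_⟩
  have htT : T ≤ t := le_trans (le_max_left T b) ht
  have htb : b ≤ t := le_trans (le_max_right T b) ht
  have ht0 : 0 ≤ t := le_trans hT0.le htT
  have hgle : g t ≤ g T := hanti (Set.self_mem_Ici) htT htT
  have hmul := mul_le_mul_of_nonneg_right hgle (Real.exp_pos (-(c * t))).le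
  rw [hg] at hmul
  simp only at hmul
  rw [mul_assoc, ← Real.exp_add, add_neg_cancel, Real.exp_zero, mul_one] at hmul
  have hgT : g T * Real.exp (-(c * t)) ≤ |g T| * Real.exp (-(c * t)) :=
    mul_le_mul_of_nonneg_right (le_abs_self _) (Real.exp_pos _).le
  have hlt := hb t htb
  simp only [hg] at hgT hlt
  have hxt : x t < ε := by nlinarith
  rw [Real.dist_eq, sub_zero, abs_of_nonneg (hx0 t ht0)]
  exact hxt
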